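/- The new code of length n constructed from a binary-reflected Gray code of length n-1 is itself a counting sequence: it visits each of the 2^n binary n-tuples exactly once. -/

import Mathlib

/-- The new counting code of length `m+1` built from a cyclic Gray code
`y` on `m`-bit words: the Gray code followed by its reversal, with every
codeword at an odd position bitwise complemented, and alternating prefix
bits `0,1,0,1,...` prepended. -/
def newCode (m : ℕ) (y : Fin (2^m) → Fin m → Bool) :
    Fin (2 * 2^m) → Fin (m+1) → Bool := fun k =>
  Fin.cons (decide (k.val % 2 = 1))
    (fun i =>
      let j : Fin (2^m) := ⟨min k.val (2 * 2^m - 1 - k.val), by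
        have hk := k.isLt
        have h1 : 1 ≤ 2^m := Nat.one_le_two_pow
        omega⟩
      if k.val % 2 = 0 then y j i else !(y j i))

/-! Since `k` and `2N - 1 - k` have opposite parities, the parity of `k` (the first bit of the
`k`-th word) and the folded index `min k (2N - 1 - k)` together determine `k`. Once the parity is
known, the complementation can be undone, so the remaining bits determine the folded index as soon
as `y` is injective. Bijectivity then follows by counting. -/

def foldIndex {N : ℕ} (k : Fin (2 * N)) : Fin N :=
  ⟨min k.val (2 * N - 1 - k.val), by omega⟩

theorem eq_of_foldIndex_eq_of_mod_two_eq {N : ℕ} {k k' : Fin (2 * N)}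
    (hpar : k.val % 2 = k'.val % 2) (h : foldIndex k = foldIndex k') : k = k' := by
  have hmin := congrArg Fin.val h
  simp only [foldIndex] at hmin
  omega

namespace newCode

variable {m : ℕ} {y : Fin (2^m) → Fin m → Bool}

theorem apply_zero (k : Fin (2 * 2^m)) : newCode m y k 0 = decide (k.val % 2 = 1) := rfl

theorem apply_succ (k : Fin (2 * 2^m)) (i : Fin m) :
    newCode m y k i.succ = (decide (k.val % 2 = 1)).xor (y (foldIndex k) i) := by
  rcases Nat.mod_two_eq_zero_or_one k.val with h | h <;> simp [newCode, foldIndex, h]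

theorem injective (hy : Function.Injective y) : Function.Injective (newCode m y) := by
  intro k k' h
  have hpar : decide (k.val % 2 = 1) = decide (k'.val % 2 = 1) := by
    simpa only [apply_zero] using congrFun h 0
  have hfold : y (foldIndex k) = y (foldIndex k') := by
    funext i
    simpa only [apply_succ, hpar, Bool.xor_right_inj] using congrFun h i.succ
  refine eq_of_foldIndex_eq_of_mod_two_eq ?_ (hy hfold)
  simp only [decide_eq_decide] at hpar
  omega

end newCode

theorem newCode_bijective_general (m : ℕ) (y : Fin (2^m) → Fin m → Bool)
    (hy : Function.Bijective y) :
    Function.Bijective (newCode m y) := by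
  refine (Fintype.bijective_iff_injective_and_card _).2 ⟨newCode.injective hy.injective, ?_⟩
  simp [pow_succ, mul_comm]

/-- The new code of length `n = m+1` built from a Gray code listing of
all `m`-bit words (e.g. the binary-reflected Gray code) is itself a counting
sequence: it visits each of the `2^(m+1)` binary `(m+1)`-tuples exactly once. -/
theorem newCode_bijective (m : ℕ) (y : Fin (2^m) → Fin m → Bool)
    (hy : Function.Bijective y)
    (hgray : ∀ k : Fin (2^m), hammingDist (y k) (y (k+1)) = 1) :
    Function.Bijective (newCode m y) :=
  newCode_bijective_general m y hy
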